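/- arXiv:1911.12827 — 6 statements merged into one kernel-verified Lean document; each statement's English description precedes it below -/
import Mathlib

section
/- Let R be a finite connected simple graph with at least two vertices, and let ℰ be a cover of E(R). Then Σ_{E ∈ ℰ} (‖E‖ − 1) ≥ |V(R)| − 1. -/
open Finset

/-- `‖E‖`: the number of vertices incident to at least one edge of `E`. -/
def nodeCount {V : Type*} [Fintype V] [DecidableEq V] (E : Finset (Sym2 V)) : ℕ :=
  (Finset.univ.filter (fun v => ∃ e ∈ E, v ∈ e)).card

/-- Vertex set of a set of edges. -/
def nodeVerts {V : Type*} [Fintype V] [DecidableEq V] (E : Finset (Sym2 V)) : Finset V :=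
  Finset.univ.filter (fun v => ∃ e ∈ E, v ∈ e)

lemma nodeCount_eq {V : Type*} [Fintype V] [DecidableEq V] (E : Finset (Sym2 V)) :
    nodeCount E = (nodeVerts E).card := rfl

lemma mem_nodeVerts {V : Type*} [Fintype V] [DecidableEq V] {E : Finset (Sym2 V)} {v : V} :
    v ∈ nodeVerts E ↔ ∃ e ∈ E, v ∈ e := by
  simp [nodeVerts]

lemma aux_main {V : Type*} [Fintype V] [DecidableEq V]
    (R : SimpleGraph V) [DecidableRel R.Adj]
    (hconn : R.Connected)
    (ℰ : Finset (Finset (Sym2 V)))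
    (hcover : ℰ.sup id = R.edgeFinset) :
    ∀ n (𝒜 : Finset (Finset (Sym2 V))), (ℰ \ 𝒜).card = n → 𝒜 ⊆ ℰ →
      (𝒜.sup nodeVerts).Nonempty →
      Fintype.card V ≤ (𝒜.sup nodeVerts).card + ∑ E ∈ ℰ \ 𝒜, (nodeCount E - 1) := by
  intro n
  induction n using Nat.strong_induction_on with
  | _ n ih =>
    intro 𝒜 hn h𝒜 hWne
    set W := 𝒜.sup nodeVerts with hW
    by_cases hWuniv : W = Finset.univ
    · rw [hWuniv, Finset.card_univ]
      exact Nat.le_add_right _ _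
    · -- there is an adjacent pair crossing the boundary of W
      have hcross : ∃ u ∈ W, ∃ v, v ∉ W ∧ R.Adj u v := by
        by_contra hcl
        push_neg at hcl
        apply hWuniv
        obtain ⟨u₀, hu₀⟩ := hWne
        apply Finset.eq_univ_of_forall
        intro x
        obtain ⟨w⟩ := hconn.preconnected u₀ x
        clear hWuniv
        induction w with
        | nil => exact hu₀
        | @cons a b c hab p ihp =>
          refine ihp ?_
          by_contra hbW
          exact hcl a hu₀ b hbW hab
      obtain ⟨u, huW, v, hvW, hadj⟩ := hcross
      have hedge : s(u, v) ∈ R.edgeFinset := by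
        rw [SimpleGraph.mem_edgeFinset]
        exact hadj
      rw [← hcover, Finset.mem_sup] at hedge
      obtain ⟨E, hEℰ, hEe⟩ := hedge
      simp only [id] at hEe
      have hEnot : E ∉ 𝒜 := by
        intro hE𝒜
        exact hvW (Finset.le_sup (f := nodeVerts) hE𝒜
          (mem_nodeVerts.mpr ⟨s(u, v), hEe, by simp⟩))
      have huE : u ∈ nodeVerts E := mem_nodeVerts.mpr ⟨s(u, v), hEe, by simp⟩
      have hvE : v ∈ nodeVerts E := mem_nodeVerts.mpr ⟨s(u, v), hEe, by simp⟩
      set 𝒜' := insert E 𝒜 with h𝒜'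
      have hsup' : 𝒜'.sup nodeVerts = nodeVerts E ∪ W := by
        rw [h𝒜', Finset.sup_insert]
        rfl
      have hEdiff : E ∈ ℰ \ 𝒜 := Finset.mem_sdiff.mpr ⟨hEℰ, hEnot⟩
      have hdiff' : ℰ \ 𝒜' = (ℰ \ 𝒜).erase E := by
        ext F
        simp [h𝒜', Finset.mem_sdiff, Finset.mem_erase, Finset.mem_insert]
        tauto
      have hnpos : 0 < n := by
        rw [← hn]
        exact Finset.card_pos.mpr ⟨E, hEdiff⟩
      have hcard' : (ℰ \ 𝒜').card = n - 1 := by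
        rw [hdiff', Finset.card_erase_of_mem hEdiff, hn]
      have h𝒜'sub : 𝒜' ⊆ ℰ := by
        rw [h𝒜']
        exact Finset.insert_subset hEℰ h𝒜
      have hne' : (𝒜'.sup nodeVerts).Nonempty := ⟨u, by
        rw [hsup']; exact Finset.mem_union_left _ huE⟩
      have := ih (n - 1) (by omega) 𝒜' hcard' h𝒜'sub hne'
      -- card bound for the union
      have hinter : u ∈ nodeVerts E ∩ W := Finset.mem_inter.mpr ⟨huE, huW⟩
      have hcu : (nodeVerts E ∪ W).card + (nodeVerts E ∩ W).card
          = (nodeVerts E).card + W.card := Finset.card_union_add_card_inter _ _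
      have hip : 1 ≤ (nodeVerts E ∩ W).card := Finset.card_pos.mpr ⟨u, hinter⟩
      have hsum : ∑ F ∈ ℰ \ 𝒜, (nodeCount F - 1)
          = (nodeCount E - 1) + ∑ F ∈ (ℰ \ 𝒜).erase E, (nodeCount F - 1) :=
        (Finset.add_sum_erase _ _ hEdiff).symm
      have hncE : 1 ≤ nodeCount E := by
        rw [nodeCount_eq]
        exact Finset.card_pos.mpr ⟨u, huE⟩
      rw [hsup'] at this
      rw [hsum, hdiff'] at *
      rw [nodeCount_eq] at *
      omega

/-- Let `R` be a finite connected simple graph with at least two vertices,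
and let `ℰ` be a cover of `E(R)` (a finite collection of nonempty subsets of `E(R)` whose
union is `E(R)`). Then `Σ_{E ∈ ℰ} (‖E‖ − 1) ≥ |V(R)| − 1`. -/
theorem cover_sum_nodeCount_sub_one_ge {V : Type*} [Fintype V] [DecidableEq V]
    (R : SimpleGraph V) [DecidableRel R.Adj]
    (hconn : R.Connected) (hcard : 2 ≤ Fintype.card V)
    (ℰ : Finset (Finset (Sym2 V)))
    (hne : ∀ E ∈ ℰ, E.Nonempty)
    (hsub : ∀ E ∈ ℰ, E ⊆ R.edgeFinset)
    (hcover : ℰ.sup id = R.edgeFinset) :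
    Fintype.card V - 1 ≤ ∑ E ∈ ℰ, (nodeCount E - 1) := by
  -- ℰ is nonempty since R has an edge
  have hedge : ∃ e, e ∈ R.edgeFinset := by
    obtain ⟨u, v, huv⟩ := Fintype.exists_pair_of_one_lt_card hcard
    obtain ⟨w⟩ := hconn.preconnected u v
    cases w with
    | nil => exact absurd rfl huv
    | cons h p => exact ⟨_, SimpleGraph.mem_edgeFinset.mpr ((SimpleGraph.mem_edgeSet R).mpr h)⟩
  obtain ⟨e, he⟩ := hedge
  rw [← hcover, Finset.mem_sup] at he
  obtain ⟨E₀, hE₀, heE₀⟩ := he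
  simp only [id] at heE₀
  have hvert : ∃ v, v ∈ nodeVerts E₀ := by
    refine ⟨e.out.1, mem_nodeVerts.mpr ⟨e, heE₀, Sym2.out_fst_mem e⟩⟩
  obtain ⟨v, hv⟩ := hvert
  have hstart : (({E₀} : Finset (Finset (Sym2 V))).sup nodeVerts).Nonempty := by
    refine ⟨v, ?_⟩
    rw [Finset.sup_singleton]
    exact hv
  have hmain := aux_main R hconn ℰ hcover (ℰ \ {E₀}).card {E₀} rfl
    (Finset.singleton_subset_iff.mpr hE₀) hstart
  rw [Finset.sup_singleton] at hmain
  have hEdiff : ℰ \ {E₀} = ℰ.erase E₀ := Finset.sdiff_singleton_eq_erase E₀ ℰ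
  rw [hEdiff] at hmain
  have hsum : ∑ F ∈ ℰ, (nodeCount F - 1)
      = (nodeCount E₀ - 1) + ∑ F ∈ ℰ.erase E₀, (nodeCount F - 1) :=
    (Finset.add_sum_erase _ _ hE₀).symm
  have hncE : 1 ≤ nodeCount E₀ := by
    rw [nodeCount_eq]
    exact Finset.card_pos.mpr ⟨v, hv⟩
  rw [nodeCount_eq] at *
  omega
end

section
/- Let r ≥ 3 and let {E₁, …, E_t} be a partition of the edge set of the complete graph K_r into t ≥ 2 nonempty sets. Then Σ_{i=1}^{t} ‖E_i‖ ≥ r + t. -/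
open Finset

/-- Let `r ≥ 3` and let `{E₁, …, E_t}` be a partition of the edge set of the
complete graph `K_r` into `t ≥ 2` nonempty sets. Then `Σ_{i=1}^t ‖E_i‖ ≥ r + t`. -/
theorem complete_graph_partition_sum_nodeCount_ge (r t : ℕ) (hr : 3 ≤ r) (ht : 2 ≤ t)
    (E : Fin t → Finset (Sym2 (Fin r)))
    (hne : ∀ i, (E i).Nonempty)
    (hdisj : ∀ i j, i ≠ j → Disjoint (E i) (E j))
    (hunion : Finset.univ.sup E = (⊤ : SimpleGraph (Fin r)).edgeFinset) :
    r + t ≤ ∑ i, nodeCount (E i) := by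
  classical
  have hntr : Nontrivial (Fin r) := by
    have : 2 ≤ r := by omega
    constructor
    exact ⟨⟨0, by omega⟩, ⟨1, by omega⟩, by simp [Fin.ext_iff]⟩
  have hsub : ∀ i, E i ⊆ (⊤ : SimpleGraph (Fin r)).edgeFinset := by
    intro i
    intro e he
    rw [← hunion, Finset.mem_sup]
    exact ⟨i, Finset.mem_univ i, he⟩
  have hnd : ∀ i, ∀ e ∈ E i, ¬ e.IsDiag := by
    intro i e he
    have h := hsub i he
    rw [SimpleGraph.mem_edgeFinset] at h
    exact (SimpleGraph.not_isDiag_of_mem_edgeSet _ h)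
  have h2 : ∀ i, 2 ≤ nodeCount (E i) := by
    intro i
    obtain ⟨e, he⟩ := hne i
    induction e using Sym2.ind with
    | _ a b =>
      have hab : a ≠ b := by
        have := hnd i _ he
        simpa using this
      have hsub2 : ({a, b} : Finset (Fin r)) ⊆
          Finset.univ.filter (fun v => ∃ e ∈ E i, v ∈ e) := by
        intro x hx
        simp only [mem_insert, mem_singleton] at hx
        simp only [mem_filter, mem_univ, true_and]
        exact ⟨s(a, b), he, by rcases hx with h | h <;> simp [h]⟩
      calc 2 = ({a, b} : Finset (Fin r)).card := (Finset.card_pair hab).symm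
        _ ≤ _ := Finset.card_le_card hsub2
  have hincid : ∀ u v : Fin r, u ≠ v → ∃ i, s(u, v) ∈ E i := by
    intro u v huv
    have h : s(u, v) ∈ Finset.univ.sup E := by
      rw [hunion, SimpleGraph.mem_edgeFinset]
      simpa using huv
    rw [Finset.mem_sup] at h
    obtain ⟨i, _, hi⟩ := h
    exact ⟨i, hi⟩
  have hkey : ∑ i, nodeCount (E i)
      = ∑ v : Fin r, (Finset.univ.filter (fun i => ∃ e ∈ E i, v ∈ e)).card := by
    simp only [nodeCount, Finset.card_filter]
    rw [Finset.sum_comm]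
  by_cases hA : ∃ v j, ∀ u, u ≠ v → s(v, u) ∈ E j
  · obtain ⟨v, j, hvj⟩ := hA
    have hEj : nodeCount (E j) = r := by
      unfold nodeCount
      rw [Finset.filter_true_of_mem, Finset.card_univ, Fintype.card_fin]
      intro u _
      by_cases huv : u = v
      · subst huv
        obtain ⟨w, hw⟩ := exists_ne u
        exact ⟨s(u, w), hvj w hw, by simp⟩
      · exact ⟨s(v, u), hvj u huv, by simp⟩
    have hsum : ∑ i, nodeCount (E i)
        = nodeCount (E j) + ∑ i ∈ Finset.univ.erase j, nodeCount (E i) :=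
      (Finset.add_sum_erase _ _ (Finset.mem_univ j)).symm
    have h3 : (Finset.univ.erase j).card * 2 ≤ ∑ i ∈ Finset.univ.erase j, nodeCount (E i) := by
      have := Finset.card_nsmul_le_sum (Finset.univ.erase j) (fun i => nodeCount (E i)) 2
        (fun i _ => h2 i)
      simpa [smul_eq_mul] using this
    have hcard : (Finset.univ.erase j).card = t - 1 := by
      rw [Finset.card_erase_of_mem (Finset.mem_univ j), Finset.card_univ, Fintype.card_fin]
    rw [hsum, hEj]
    rw [hcard] at h3
    omega
  · push_neg at hA
    have hd : ∀ v : Fin r, 2 ≤ (Finset.univ.filter (fun i => ∃ e ∈ E i, v ∈ e)).card := by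
      intro v
      obtain ⟨u0, hu0⟩ := exists_ne v
      obtain ⟨i0, hi0⟩ := hincid v u0 (Ne.symm hu0)
      obtain ⟨u1, hu1, hnot⟩ := hA v i0
      obtain ⟨i1, hi1⟩ := hincid v u1 (Ne.symm hu1)
      have hne01 : i0 ≠ i1 := by rintro rfl; exact hnot hi1
      have hsub3 : ({i0, i1} : Finset (Fin t)) ⊆
          Finset.univ.filter (fun i => ∃ e ∈ E i, v ∈ e) := by
        intro x hx
        simp only [mem_insert, mem_singleton] at hx
        simp only [mem_filter, mem_univ, true_and]
        rcases hx with h | h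
        · exact ⟨s(v, u0), h ▸ hi0, by simp⟩
        · exact ⟨s(v, u1), h ▸ hi1, by simp⟩
      calc 2 = ({i0, i1} : Finset (Fin t)).card := (Finset.card_pair hne01).symm
        _ ≤ _ := Finset.card_le_card hsub3
    have hge2r : r * 2 ≤ ∑ i, nodeCount (E i) := by
      rw [hkey]
      have := Finset.card_nsmul_le_sum (Finset.univ : Finset (Fin r))
        (fun v => (Finset.univ.filter (fun i => ∃ e ∈ E i, v ∈ e)).card) 2
        (fun v _ => hd v)
      simpa [smul_eq_mul] using this
    have hge2t : t * 2 ≤ ∑ i, nodeCount (E i) := by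
      have := Finset.card_nsmul_le_sum (Finset.univ : Finset (Fin t))
        (fun i => nodeCount (E i)) 2 (fun i _ => h2 i)
      simpa [smul_eq_mul] using this
    omega
end

section
/- Let r ≥ 3 and let {E₁, …, E_t} be a partition of the edge set of the cycle graph C_r on r vertices into t ≥ 2 nonempty sets. Then Σ_{i=1}^{t} ‖E_i‖ ≥ r + t. -/
open Finset

lemma filter_mem_card_eq_two {V : Type*} [Fintype V] [DecidableEq V]
    (e : Sym2 V) (he : ¬ e.IsDiag) :
    (Finset.univ.filter (fun v => v ∈ e)).card = 2 := by
  induction e using Sym2.ind with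
  | _ a b =>
    rw [Sym2.isDiag_iff_proj_eq] at he
    have h : Finset.univ.filter (fun v => v ∈ s(a,b)) = {a, b} := by
      ext v; simp [Sym2.mem_iff]
    rw [h, Finset.card_insert_of_notMem (by simp [he]), Finset.card_singleton]

lemma sum_inc {V : Type*} [Fintype V] [DecidableEq V]
    (C : SimpleGraph V) [DecidableRel C.Adj]
    (E : Finset (Sym2 V)) (hE : E ⊆ C.edgeFinset) :
    ∑ v : V, (E.filter (fun e => v ∈ e)).card = 2 * E.card := by
  have hnd : ∀ e ∈ E, ¬ e.IsDiag := by
    intro e he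
    exact C.not_isDiag_of_mem_edgeSet (SimpleGraph.mem_edgeFinset.mp (hE he))
  calc ∑ v : V, (E.filter (fun e => v ∈ e)).card
      = ∑ v : V, ∑ e ∈ E, if v ∈ e then 1 else 0 :=
        Finset.sum_congr rfl fun v _ => Finset.card_filter _ _
    _ = ∑ e ∈ E, ∑ v : V, if v ∈ e then 1 else 0 := Finset.sum_comm
    _ = ∑ _e ∈ E, 2 := by
        refine Finset.sum_congr rfl fun e he => ?_
        rw [← Finset.card_filter]
        exact filter_mem_card_eq_two e (hnd e he)
    _ = 2 * E.card := by rw [Finset.sum_const, smul_eq_mul, mul_comm]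

lemma nodeCount_key {V : Type*} [Fintype V] [DecidableEq V]
    (C : SimpleGraph V) [DecidableRel C.Adj]
    (hconn : C.Connected) (hreg : ∀ v : V, C.degree v = 2)
    (E : Finset (Sym2 V)) (hE : E ⊆ C.edgeFinset) (hne : E.Nonempty)
    (hproper : E ≠ C.edgeFinset) : E.card + 1 ≤ nodeCount E := by
  by_contra h
  push_neg at h
  have hle : nodeCount E ≤ E.card := by omega
  set S := Finset.univ.filter (fun v => ∃ e ∈ E, v ∈ e) with hS
  have hsub_inc : ∀ v : V, E.filter (fun e => v ∈ e) ⊆ C.incidenceFinset v := by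
    intro v e he
    rw [Finset.mem_filter] at he
    rw [SimpleGraph.mem_incidenceFinset]
    exact ⟨by simpa [SimpleGraph.mem_edgeFinset] using hE he.1, he.2⟩
  have hdeg_le : ∀ v : V, (E.filter (fun e => v ∈ e)).card ≤ 2 := by
    intro v
    calc (E.filter (fun e => v ∈ e)).card ≤ (C.incidenceFinset v).card :=
          Finset.card_le_card (hsub_inc v)
      _ = C.degree v := C.card_incidenceFinset_eq_degree v
      _ = 2 := hreg v
  have hzero : ∀ v ∉ S, (E.filter (fun e => v ∈ e)).card = 0 := by
    intro v hv
    rw [hS, Finset.mem_filter] at hv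
    push_neg at hv
    rw [Finset.card_eq_zero, Finset.filter_eq_empty_iff]
    intro e he
    exact hv (Finset.mem_univ v) e he
  have hsumS : ∑ v ∈ S, (E.filter (fun e => v ∈ e)).card = 2 * E.card := by
    rw [← sum_inc C E hE]
    exact Finset.sum_subset (Finset.subset_univ S) (fun v _ hv => hzero v hv)
  have hScard : S.card = nodeCount E := rfl
  have hge : ∑ v ∈ S, (E.filter (fun e => v ∈ e)).card ≤ 2 * S.card := by
    calc ∑ v ∈ S, (E.filter (fun e => v ∈ e)).card ≤ ∑ _v ∈ S, 2 :=
          Finset.sum_le_sum fun v _ => hdeg_le v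
      _ = 2 * S.card := by rw [Finset.sum_const, smul_eq_mul, mul_comm]
  have hSE : S.card = E.card := by
    have := hsumS ▸ hge
    have : E.card ≤ S.card := by omega
    omega
  have heqsum : ∑ v ∈ S, (E.filter (fun e => v ∈ e)).card = ∑ _v ∈ S, 2 := by
    rw [hsumS, Finset.sum_const, smul_eq_mul, mul_comm, hSE]
  have hdeg2 : ∀ v ∈ S, (E.filter (fun e => v ∈ e)).card = 2 :=
    (Finset.sum_eq_sum_iff_of_le (fun v _ => hdeg_le v)).mp heqsum
  -- for v ∈ S, every incident edge is in E
  have hclosed : ∀ v ∈ S, C.incidenceFinset v ⊆ E := by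
    intro v hv
    have hcard2 : (C.incidenceFinset v).card = 2 := by
      rw [C.card_incidenceFinset_eq_degree v, hreg v]
    have heq : E.filter (fun e => v ∈ e) = C.incidenceFinset v :=
      Finset.eq_of_subset_of_card_le (hsub_inc v) (by rw [hcard2, hdeg2 v hv])
    intro e he
    rw [← heq] at he
    exact (Finset.mem_filter.mp he).1
  have hadj : ∀ v ∈ S, ∀ w, C.Adj v w → w ∈ S := by
    intro v hv w hvw
    have he : s(v,w) ∈ E := hclosed v hv (by
      rw [SimpleGraph.mem_incidenceFinset]
      exact ⟨hvw, Sym2.mem_mk_left v w⟩)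
    rw [hS, Finset.mem_filter]
    exact ⟨Finset.mem_univ w, s(v,w), he, Sym2.mem_mk_right v w⟩
  -- get a starting vertex in S
  obtain ⟨e0, he0⟩ := hne
  obtain ⟨a, ha⟩ : ∃ a, a ∈ e0 := by
    induction e0 using Sym2.ind with
    | _ x y => exact ⟨x, Sym2.mem_mk_left x y⟩
  have haS : a ∈ S := by
    rw [hS, Finset.mem_filter]
    exact ⟨Finset.mem_univ a, e0, he0, ha⟩
  have hstep : ∀ {x y : V} (_ : C.Walk x y), x ∈ S → y ∈ S := by
    intro x y p
    induction p with
    | nil => exact id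
    | cons h _ ih => exact fun hx => ih (hadj _ hx _ h)
  have hall : ∀ u : V, u ∈ S := fun u => (hconn.preconnected a u).elim fun w => hstep w haS
  apply hproper
  refine Finset.Subset.antisymm hE ?_
  intro e he
  induction e using Sym2.ind with
  | _ x y =>
    have hxy : C.Adj x y := SimpleGraph.mem_edgeFinset.mp he
    exact hclosed x (hall x) (by
      rw [SimpleGraph.mem_incidenceFinset]
      exact ⟨hxy, Sym2.mem_mk_left x y⟩)

/-- Let `r ≥ 3` and let `{E₁, …, E_t}` be a partition of the edge set of the
cycle graph `C_r` on `r` vertices (the connected 2-regular simple graph on `r` vertices)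
into `t ≥ 2` nonempty sets. Then `Σ_{i=1}^t ‖E_i‖ ≥ r + t`. -/
theorem cycle_graph_partition_sum_nodeCount_ge {V : Type*} [Fintype V] [DecidableEq V]
    (C : SimpleGraph V) [DecidableRel C.Adj] (r t : ℕ) (hr : 3 ≤ r) (ht : 2 ≤ t)
    (hcard : Fintype.card V = r)
    (hconn : C.Connected) (hreg : ∀ v : V, C.degree v = 2)
    (E : Fin t → Finset (Sym2 V))
    (hne : ∀ i, (E i).Nonempty)
    (hdisj : ∀ i j, i ≠ j → Disjoint (E i) (E j))
    (hunion : Finset.univ.sup E = C.edgeFinset) :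
    r + t ≤ ∑ i, nodeCount (E i) := by
  have hEsub : ∀ i, E i ⊆ C.edgeFinset := by
    intro i
    rw [← hunion]
    exact Finset.le_sup (f := E) (Finset.mem_univ i)
  have hproper : ∀ i, E i ≠ C.edgeFinset := by
    intro i hi
    have : Nontrivial (Fin t) := Fin.nontrivial_iff_two_le.mpr ht
    obtain ⟨j, hj⟩ := exists_ne i
    have hsub : E j ⊆ E i := hi ▸ hEsub j
    exact (hne j).ne_empty (Finset.eq_empty_of_forall_notMem fun e hej =>
      (Finset.disjoint_left.mp (hdisj j i hj)) hej (hsub hej))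
  have hkey : ∀ i, (E i).card + 1 ≤ nodeCount (E i) :=
    fun i => nodeCount_key C hconn hreg (E i) (hEsub i) (hne i) (hproper i)
  have hedges : C.edgeFinset.card = r := by
    have h2 : ∑ v : V, C.degree v = 2 * C.edgeFinset.card :=
      C.sum_degrees_eq_twice_card_edges
    have : ∑ v : V, C.degree v = 2 * r := by
      simp [hreg, Finset.sum_const, hcard, mul_comm]
    omega
  have hcards : ∑ i, (E i).card = r := by
    rw [← hedges, ← hunion, Finset.sup_eq_biUnion,
      Finset.card_biUnion (fun i _ j _ hij => hdisj i j hij)]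
  calc r + t = ∑ i, ((E i).card + 1) := by
        rw [Finset.sum_add_distrib, hcards]; simp
    _ ≤ ∑ i, nodeCount (E i) := Finset.sum_le_sum fun i _ => hkey i
end

section
/- Let r be an even positive integer and let R be a finite simple graph with r vertices. Let πₙ (n ∈ ℕ) and π be Borel probability measures on ℕ × [0,1] such that πₙ → π weakly. If sup_n (πₙ^M)_{r, r/2} → 0 as M → ∞, then sup_n max_{∅ ≠ E ⊆ E(R)} (πₙ^M)_{‖E‖, |E|} → 0 as M → ∞. -/
open MeasureTheory Filter Topology Finset
open scoped ENNReal

/-- The cross-moment `(π)_{a,b} = E[(X)_a Y^b]` for `(X,Y) ∼ π`, a Borel probability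
measure on `ℕ × [0,1]`, where `(x)_a` is the falling factorial. -/
noncomputable def mom (μ : Measure (ℕ × unitInterval)) (a b : ℕ) : ℝ≥0∞ :=
  ∫⁻ p, (p.1.descFactorial a : ℝ≥0∞) * ENNReal.ofReal ((p.2 : ℝ) ^ b) ∂μ

/-- The truncated cross-moment `(π^M)_{a,b} = E[(X)_a Y^b 1(X > M)]`. -/
noncomputable def tmom (μ : Measure (ℕ × unitInterval)) (M a b : ℕ) : ℝ≥0∞ :=
  ∫⁻ p, (if M < p.1 then (p.1.descFactorial a : ℝ≥0∞) * ENNReal.ofReal ((p.2 : ℝ) ^ b) else 0) ∂μ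

lemma aux_nat (r x : ℕ) (hx : 2*r ≤ x) : x^r ≤ 2^r * x.descFactorial r := by
  calc x^r ≤ (2*(x+1-r))^r := Nat.pow_le_pow_left (by omega) r
  _ = 2^r * (x+1-r)^r := mul_pow 2 _ r
  _ ≤ 2^r * x.descFactorial r := Nat.mul_le_mul_left _ (Nat.pow_sub_le_descFactorial x r)

lemma nodeCount_le_twice {V : Type*} [Fintype V] [DecidableEq V] (E : Finset (Sym2 V)) :
    nodeCount E ≤ 2 * E.card := by
  have hsub : (Finset.univ.filter (fun v => ∃ e ∈ E, v ∈ e)) ⊆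
      E.biUnion (fun e => Finset.univ.filter (fun v => v ∈ e)) := by
    intro v hv
    simp only [Finset.mem_filter, Finset.mem_univ, true_and] at hv
    obtain ⟨e, he, hve⟩ := hv
    exact Finset.mem_biUnion.mpr ⟨e, he, by simp [hve]⟩
  have hcard2 : ∀ e : Sym2 V, (Finset.univ.filter (fun v => v ∈ e)).card ≤ 2 := by
    intro e
    induction e using Sym2.ind with
    | _ u w =>
      have : (Finset.univ.filter (fun v => v ∈ s(u, w))) = {u, w} := by
        ext v; simp [Sym2.mem_iff]
      rw [this]
      exact Finset.card_insert_le u {w} |>.trans (by simp)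
  calc nodeCount E ≤ (E.biUnion (fun e => Finset.univ.filter (fun v => v ∈ e))).card :=
        Finset.card_le_card hsub
  _ ≤ ∑ e ∈ E, (Finset.univ.filter (fun v => v ∈ e)).card := Finset.card_biUnion_le
  _ ≤ ∑ _e ∈ E, 2 := Finset.sum_le_sum (fun e _ => hcard2 e)
  _ = 2 * E.card := by rw [Finset.sum_const, smul_eq_mul, mul_comm]

lemma real_key {r a b : ℕ} (hr : 0 < r) (hre : Even r) (har : a ≤ r) (hab : a ≤ 2*b)
    (x : ℕ) (y : ℝ) (hy0 : 0 ≤ y) (hy1 : y ≤ 1) :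
    (x.descFactorial a : ℝ) * y ^ b ≤
      (((2*r:ℕ):ℝ) ^ r + 1) + (2:ℝ) ^ r * ((x.descFactorial r : ℝ) * y ^ (r/2)) := by
  have hRnn : (0:ℝ) ≤ (2:ℝ)^r * ((x.descFactorial r : ℝ) * y^(r/2)) := by positivity
  have hCnn : (0:ℝ) ≤ ((2*r:ℕ):ℝ)^r := by positivity
  by_cases hx : x ≤ 2*r
  · have h1 : x.descFactorial a ≤ (2*r)^r :=
      le_trans (Nat.descFactorial_le_pow x a)
        (le_trans (Nat.pow_le_pow_left hx a) (Nat.pow_le_pow_right (by omega) har))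
    have h2 : (x.descFactorial a : ℝ) ≤ ((2*r:ℕ):ℝ)^r := by exact_mod_cast h1
    have h3 : y^b ≤ 1 := pow_le_one₀ hy0 hy1
    have h4 : (0:ℝ) ≤ (x.descFactorial a : ℝ) := Nat.cast_nonneg _
    nlinarith
  · push_neg at hx
    obtain ⟨k, hk⟩ := hre
    set c := (a+1)/2 with hc
    have hca : a ≤ 2*c := by omega
    have hcb : c ≤ b := by omega
    have hcr : c ≤ r/2 := by omega
    have hx1 : (1:ℝ) ≤ (x:ℝ) := by exact_mod_cast (by omega : 1 ≤ x)
    have step1 : (x.descFactorial a : ℝ) * y^b ≤ ((x:ℝ)^2*y)^c := by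
      have e1 : (x.descFactorial a : ℝ) ≤ (x:ℝ)^a := by exact_mod_cast Nat.descFactorial_le_pow x a
      have e2 : y^b ≤ y^c := pow_le_pow_of_le_one hy0 hy1 hcb
      have e3 : (x:ℝ)^a ≤ (x:ℝ)^(2*c) := pow_le_pow_right₀ hx1 hca
      calc (x.descFactorial a : ℝ) * y^b ≤ (x:ℝ)^a * y^c :=
            mul_le_mul e1 e2 (pow_nonneg hy0 b) (by positivity)
      _ ≤ (x:ℝ)^(2*c) * y^c := mul_le_mul_of_nonneg_right e3 (pow_nonneg hy0 c)
      _ = ((x:ℝ)^2*y)^c := by rw [mul_pow, pow_mul]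
    by_cases hu : (x:ℝ)^2*y ≤ 1
    · have h1 : ((x:ℝ)^2*y)^c ≤ 1 := pow_le_one₀ (by positivity) hu
      linarith
    · push_neg at hu
      have step2 : ((x:ℝ)^2*y)^c ≤ ((x:ℝ)^2*y)^(r/2) := pow_le_pow_right₀ (le_of_lt hu) hcr
      have step3 : ((x:ℝ)^2*y)^(r/2) = (x:ℝ)^r * y^(r/2) := by
        rw [mul_pow, ← pow_mul, show 2*(r/2) = r by omega]
      have step4 : (x:ℝ)^r ≤ (2:ℝ)^r * (x.descFactorial r : ℝ) := by
        exact_mod_cast aux_nat r x (le_of_lt hx)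
      have step5 : (x:ℝ)^r * y^(r/2) ≤ (2:ℝ)^r * ((x.descFactorial r : ℝ) * y^(r/2)) := by
        rw [← mul_assoc]
        exact mul_le_mul_of_nonneg_right step4 (pow_nonneg hy0 _)
      linarith

lemma point_le {r a b : ℕ} (hr : 0 < r) (hre : Even r) (har : a ≤ r) (hab : a ≤ 2*b)
    (p : ℕ × unitInterval) :
    (p.1.descFactorial a : ℝ≥0∞) * ENNReal.ofReal ((p.2 : ℝ) ^ b) ≤
      (((2*r)^r + 1 : ℕ) : ℝ≥0∞) +
        (2:ℝ≥0∞)^r * ((p.1.descFactorial r : ℝ≥0∞) * ENNReal.ofReal ((p.2 : ℝ) ^ (r/2))) := by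
  obtain ⟨hy0, hy1⟩ := p.2.2
  have key := real_key hr hre har hab p.1 (p.2 : ℝ) hy0 hy1
  have hL : (p.1.descFactorial a : ℝ≥0∞) * ENNReal.ofReal ((p.2 : ℝ) ^ b) =
      ENNReal.ofReal ((p.1.descFactorial a : ℝ) * (p.2 : ℝ) ^ b) := by
    rw [ENNReal.ofReal_mul (Nat.cast_nonneg _), ENNReal.ofReal_natCast]
  have h1 : ENNReal.ofReal (((2*r:ℕ):ℝ)^r + 1) = (((2*r)^r + 1 : ℕ) : ℝ≥0∞) := by
    rw [show ((2*r:ℕ):ℝ)^r + 1 = (((2*r)^r + 1 : ℕ) : ℝ) by push_cast; ring,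
      ENNReal.ofReal_natCast]
  have h2 : ENNReal.ofReal ((2:ℝ)^r * ((p.1.descFactorial r : ℝ) * (p.2:ℝ)^(r/2))) =
      (2:ℝ≥0∞)^r * ((p.1.descFactorial r : ℝ≥0∞) * ENNReal.ofReal ((p.2:ℝ)^(r/2))) := by
    rw [ENNReal.ofReal_mul (by positivity), ENNReal.ofReal_mul (Nat.cast_nonneg _),
      ENNReal.ofReal_pow (by norm_num), ENNReal.ofReal_ofNat, ENNReal.ofReal_natCast]
  calc (p.1.descFactorial a : ℝ≥0∞) * ENNReal.ofReal ((p.2 : ℝ) ^ b)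
      = ENNReal.ofReal ((p.1.descFactorial a : ℝ) * (p.2 : ℝ) ^ b) := hL
  _ ≤ ENNReal.ofReal ((((2*r:ℕ):ℝ)^r + 1) +
        (2:ℝ)^r * ((p.1.descFactorial r : ℝ) * (p.2:ℝ)^(r/2))) := ENNReal.ofReal_le_ofReal key
  _ ≤ ENNReal.ofReal (((2*r:ℕ):ℝ)^r + 1) +
        ENNReal.ofReal ((2:ℝ)^r * ((p.1.descFactorial r : ℝ) * (p.2:ℝ)^(r/2))) :=
      ENNReal.ofReal_add_le
  _ = _ := by rw [h1, h2]

lemma meas_aux (M a b : ℕ) : Measurable fun p : ℕ × unitInterval =>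
    (if M < p.1 then (p.1.descFactorial a : ℝ≥0∞) else 0) * ENNReal.ofReal ((p.2:ℝ)^b) := by
  apply Measurable.mul
  · exact (Measurable.of_discrete (f := fun x : ℕ => if M < x then (x.descFactorial a : ℝ≥0∞) else 0)).comp measurable_fst
  · exact ENNReal.measurable_ofReal.comp
      (((continuous_subtype_val.comp continuous_snd).pow b).measurable)

lemma tmom_eq (μ : Measure (ℕ × unitInterval)) (M a b : ℕ) :
    tmom μ M a b = ∫⁻ p, (if M < p.1 then (p.1.descFactorial a : ℝ≥0∞) else 0) *
      ENNReal.ofReal ((p.2:ℝ)^b) ∂μ := by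
  unfold tmom
  congr 1
  funext p
  split <;> simp

lemma setS_measurable (M : ℕ) : MeasurableSet {p : ℕ × unitInterval | M < p.1} := by
  have : {p : ℕ × unitInterval | M < p.1} = (fun p : ℕ × unitInterval => p.1) ⁻¹' {x | M < x} := rfl
  rw [this]
  exact measurable_fst (MeasurableSet.of_discrete)

lemma tmom_le (μ : Measure (ℕ × unitInterval)) {r a b : ℕ} (M : ℕ)
    (hr : 0 < r) (hre : Even r) (har : a ≤ r) (hab : a ≤ 2*b) :
    tmom μ M a b ≤ (((2*r)^r + 1 : ℕ):ℝ≥0∞) * μ {p | M < p.1} +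
      (2:ℝ≥0∞)^r * tmom μ M r (r/2) := by
  set C : ℝ≥0∞ := (((2*r)^r + 1 : ℕ):ℝ≥0∞) with hC
  have hS := setS_measurable M
  have step : tmom μ M a b ≤ ∫⁻ p, ({q : ℕ × unitInterval | M < q.1}.indicator (fun _ => C) p +
      (2:ℝ≥0∞)^r * ((if M < p.1 then (p.1.descFactorial r : ℝ≥0∞) else 0) *
        ENNReal.ofReal ((p.2:ℝ)^(r/2)))) ∂μ := by
    apply lintegral_mono
    intro p
    by_cases h : M < p.1
    · simp only [h, if_pos, Set.indicator_apply, Set.mem_setOf_eq, if_true]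
      exact point_le hr hre har hab p
    · simp [h, Set.indicator_apply]
  calc tmom μ M a b ≤ _ := step
  _ = (∫⁻ p, ({q : ℕ × unitInterval | M < q.1}.indicator (fun _ => C) p) ∂μ) +
      ∫⁻ p, (2:ℝ≥0∞)^r * ((if M < p.1 then (p.1.descFactorial r : ℝ≥0∞) else 0) *
        ENNReal.ofReal ((p.2:ℝ)^(r/2))) ∂μ :=
      lintegral_add_left (measurable_const.indicator hS) _
  _ = C * μ {p | M < p.1} + (2:ℝ≥0∞)^r * tmom μ M r (r/2) := by
    rw [lintegral_indicator_const hS, lintegral_const_mul _ (meas_aux M r (r/2)),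
      ← tmom_eq]

lemma tmom_anti (μ : Measure (ℕ × unitInterval)) (a b : ℕ) {M M' : ℕ} (h : M ≤ M') :
    tmom μ M' a b ≤ tmom μ M a b := by
  apply lintegral_mono
  intro p
  dsimp only
  split_ifs with h1 h2
  · exact le_rfl
  · omega
  · exact zero_le
  · exact le_rfl

/-- Let `r` be an even positive integer and `R` a finite simple graph with
`r` vertices. Let `πₙ` and `π` be Borel probability measures on `ℕ × [0,1]` with `πₙ → π`
weakly. If `sup_n (πₙ^M)_{r,r/2} → 0` as `M → ∞`, then
`sup_n max_{∅ ≠ E ⊆ E(R)} (πₙ^M)_{‖E‖,|E|} → 0` as `M → ∞`. -/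
theorem sup_max_truncated_moment_tendsto_zero_of_even
    {V : Type*} [Fintype V] [DecidableEq V] (R : SimpleGraph V) [DecidableRel R.Adj]
    (r : ℕ) (hr : 0 < r) (hreven : Even r) (hcard : Fintype.card V = r)
    (π : ℕ → ProbabilityMeasure (ℕ × unitInterval)) (πl : ProbabilityMeasure (ℕ × unitInterval))
    (hweak : Tendsto π atTop (𝓝 πl))
    (hsup : Tendsto (fun M => ⨆ n, tmom (π n).toMeasure M r (r / 2)) atTop (𝓝 0)) :
    Tendsto (fun M => ⨆ n,
        (R.edgeFinset.powerset.filter (fun E => E.Nonempty)).sup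
          (fun E => tmom (π n).toMeasure M (nodeCount E) E.card))
      atTop (𝓝 0) := by
  set S : ℕ → Set (ℕ × unitInterval) := fun M => {p | M < p.1} with hSdef
  have hSanti : Antitone S := fun M M' h p hp => lt_of_le_of_lt h hp
  -- tightness: sup_n (π n) (S M) → 0
  have hone : ∀ (μ : ProbabilityMeasure (ℕ × unitInterval)),
      Tendsto (fun M => μ.toMeasure (S M)) atTop (𝓝 0) := by
    intro μ
    have h0 : (⋂ M, S M) = ∅ := by
      ext p
      simp only [Set.mem_iInter, Set.mem_empty_iff_false, iff_false, not_forall]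
      exact ⟨p.1, by simp [hSdef]⟩
    have := tendsto_measure_iInter_atTop (μ := μ.toMeasure)
      (fun M => (setS_measurable M).nullMeasurableSet) hSanti ⟨0, measure_ne_top _ _⟩
    rw [h0] at this
    simp only [measure_empty] at this
    exact this
  have htight : Tendsto (fun M => ⨆ n, (π n).toMeasure (S M)) atTop (𝓝 0) := by
    rw [ENNReal.tendsto_atTop_zero]
    intro ε hε
    have hlim := hone πl
    obtain ⟨M₀, hM₀⟩ := eventually_atTop.mp (hlim.eventually_lt_const hε)
    have hconv : Tendsto (fun n => (π n).toMeasure (S M₀)) atTop (𝓝 (πl.toMeasure (S M₀))) :=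
      ProbabilityMeasure.tendsto_measure_of_null_frontier_of_tendsto' hweak
        (by rw [show frontier (S M₀) = ∅ from (IsClopen.frontier_eq
          ((isClopen_discrete {x : ℕ | M₀ < x}).preimage continuous_fst))]; simp)
    obtain ⟨N, hN⟩ := eventually_atTop.mp (hconv.eventually_lt_const (hM₀ M₀ le_rfl))
    have hind : ∀ n, ∃ m, ∀ M ≥ m, (π n).toMeasure (S M) < ε := by
      intro n
      exact eventually_atTop.mp ((hone (π n)).eventually_lt_const hε)
    choose m hm using hind
    refine ⟨max M₀ ((Finset.range N).sup m), fun M hM => ?_⟩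
    apply iSup_le
    intro n
    rcases lt_or_ge n N with hn | hn
    · refine le_of_lt (hm n M ?_)
      calc m n ≤ (Finset.range N).sup m := Finset.le_sup (Finset.mem_range.mpr hn)
      _ ≤ M := le_trans (le_max_right _ _) hM
    · have h1 : (π n).toMeasure (S M) ≤ (π n).toMeasure (S M₀) :=
        measure_mono (hSanti (le_trans (le_max_left _ _) hM))
      exact h1.trans (le_of_lt (hN n hn))
  -- main bound
  set C : ℝ≥0∞ := (((2*r)^r + 1 : ℕ):ℝ≥0∞) with hC
  have hbound : ∀ M, (⨆ n, (R.edgeFinset.powerset.filter (fun E => E.Nonempty)).sup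
      (fun E => tmom (π n).toMeasure M (nodeCount E) E.card)) ≤
      C * (⨆ n, (π n).toMeasure (S M)) + (2:ℝ≥0∞)^r * (⨆ n, tmom (π n).toMeasure M r (r/2)) := by
    intro M
    apply iSup_le
    intro n
    apply Finset.sup_le
    intro E _
    have har : nodeCount E ≤ r := by
      rw [← hcard]
      unfold nodeCount
      exact le_trans (Finset.card_filter_le _ _) (le_of_eq (Finset.card_univ))
    have hab : nodeCount E ≤ 2 * E.card := nodeCount_le_twice E
    calc tmom (π n).toMeasure M (nodeCount E) E.card
        ≤ C * (π n).toMeasure (S M) + (2:ℝ≥0∞)^r * tmom (π n).toMeasure M r (r/2) :=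
          tmom_le _ M hr hreven har hab
    _ ≤ _ := add_le_add (mul_le_mul_right (le_iSup (fun n => (π n).toMeasure (S M)) n) C)
          (mul_le_mul_right (le_iSup (fun n => tmom (π n).toMeasure M r (r/2)) n) _)
  have hrhs : Tendsto (fun M => C * (⨆ n, (π n).toMeasure (S M)) +
      (2:ℝ≥0∞)^r * (⨆ n, tmom (π n).toMeasure M r (r/2))) atTop (𝓝 0) := by
    have h1 : Tendsto (fun M => C * (⨆ n, (π n).toMeasure (S M))) atTop (𝓝 (C * 0)) :=
      ENNReal.Tendsto.const_mul htight (Or.inr (ENNReal.natCast_ne_top _))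
    have h2 : Tendsto (fun M => (2:ℝ≥0∞)^r * (⨆ n, tmom (π n).toMeasure M r (r/2)))
        atTop (𝓝 ((2:ℝ≥0∞)^r * 0)) :=
      ENNReal.Tendsto.const_mul hsup (Or.inr (ENNReal.pow_ne_top (by norm_num)))
    have := h1.add h2
    simpa using this
  exact tendsto_of_tendsto_of_tendsto_of_le_of_le tendsto_const_nhds hrhs
    (fun M => zero_le) hbound
end

section
/- Let r and a be integers with 1 ≤ a ≤ r, let b be a real number with b ≥ a/2, let x be a nonnegative integer, and let y ∈ [0,1]. Then (x)_a · y^b ≤ 1 + (r!)^{r/a} + r! · (x)_r · y^{r/2}. -/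
open Real

lemma pow_le_factorial_mul_descFactorial : ∀ (r x : ℕ), r ≤ x →
    x ^ r ≤ r.factorial * x.descFactorial r := by
  intro r
  induction r with
  | zero => intro x _; simp
  | succ r ih =>
    intro x hx
    rw [pow_succ, Nat.factorial_succ, Nat.descFactorial_succ]
    have h1 := ih x (Nat.le_of_succ_le hx)
    have h2 : x ≤ (r + 1) * (x - r) := by
      obtain ⟨k, rfl⟩ := Nat.exists_eq_add_of_le hx
      have hq : r + 1 + k - r = 1 + k := by omega
      rw [hq]; nlinarith
    calc x ^ r * x ≤ (r.factorial * x.descFactorial r) * ((r + 1) * (x - r)) :=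
          Nat.mul_le_mul h1 h2
      _ = (r + 1) * r.factorial * ((x - r) * x.descFactorial r) := by ring

lemma descFactorial_le_factorial' (x a : ℕ) : x.descFactorial a ≤ x.factorial := by
  rcases le_or_gt a x with h | h
  · have := Nat.factorial_mul_descFactorial h
    calc x.descFactorial a ≤ (x - a).factorial * x.descFactorial a :=
          Nat.le_mul_of_pos_left _ (Nat.factorial_pos _)
      _ = x.factorial := this
  · rw [Nat.descFactorial_eq_zero_iff_lt.mpr h]; exact Nat.zero_le _

/-- Let `r, a` be integers with `1 ≤ a ≤ r`, let `b` be a real number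
with `b ≥ a/2`, let `x` be a nonnegative integer, and let `y ∈ [0,1]`. Then
`(x)_a · y^b ≤ 1 + (r!)^{r/a} + r! · (x)_r · y^{r/2}` (real powers). -/
theorem descFactorial_rpow_bound (r a : ℕ) (ha : 1 ≤ a) (har : a ≤ r)
    (b : ℝ) (hb : (a : ℝ) / 2 ≤ b) (x : ℕ) (y : ℝ) (hy0 : 0 ≤ y) (hy1 : y ≤ 1) :
    (x.descFactorial a : ℝ) * y ^ b ≤
      1 + (r.factorial : ℝ) ^ ((r : ℝ) / (a : ℝ)) +
        (r.factorial : ℝ) * (x.descFactorial r : ℝ) * y ^ ((r : ℝ) / 2) := by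
  have ha0 : (0:ℝ) < (a:ℝ) := by exact_mod_cast ha
  have hfac1 : (1:ℝ) ≤ (r.factorial : ℝ) := by exact_mod_cast r.factorial_pos
  have hra : (1:ℝ) ≤ (r:ℝ) / (a:ℝ) := by
    rw [le_div_iff₀ ha0]
    simpa using (show (a:ℝ) ≤ (r:ℝ) by exact_mod_cast har)
  have hrpow1 : (1:ℝ) ≤ (r.factorial : ℝ) ^ ((r:ℝ) / (a:ℝ)) :=
    Real.one_le_rpow hfac1 (by linarith)
  have hbpos : 0 < b := by
    have : (1:ℝ)/2 ≤ (a:ℝ)/2 := by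
      have : (1:ℝ) ≤ (a:ℝ) := by exact_mod_cast ha
      linarith
    linarith
  rcases eq_or_lt_of_le hy0 with h0 | hy0'
  · rw [← h0, Real.zero_rpow (ne_of_gt hbpos), mul_zero]
    have h1 : (0:ℝ) ≤ (r.factorial : ℝ) * (x.descFactorial r : ℝ) * (0:ℝ) ^ ((r:ℝ)/2) := by
      positivity
    linarith
  have hyb : y ^ b ≤ y ^ ((a:ℝ)/2) :=
    Real.rpow_le_rpow_of_exponent_ge hy0' hy1 hb
  have step1 : (x.descFactorial a : ℝ) * y ^ b ≤ (x.descFactorial a : ℝ) * y ^ ((a:ℝ)/2) :=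
    mul_le_mul_of_nonneg_left hyb (by positivity)
  have hlast : (0:ℝ) ≤ (r.factorial : ℝ) * (x.descFactorial r : ℝ) * y ^ ((r:ℝ)/2) := by
    positivity
  by_cases hT : (x.descFactorial a : ℝ) * y ^ ((a:ℝ)/2) ≤ (r.factorial : ℝ) ^ ((r:ℝ)/(a:ℝ))
  · linarith
  push_neg at hT
  -- x must be at least r
  have hx : r ≤ x := by
    by_contra hxr
    push_neg at hxr
    have h1 : (x.descFactorial a : ℝ) ≤ (r.factorial : ℝ) := by
      exact_mod_cast le_trans (descFactorial_le_factorial' x a)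
        (Nat.factorial_le (le_of_lt hxr))
    have h2 : y ^ ((a:ℝ)/2) ≤ 1 := Real.rpow_le_one hy0 hy1 (by positivity)
    have h3 : (r.factorial : ℝ) ≤ (r.factorial : ℝ) ^ ((r:ℝ)/(a:ℝ)) := by
      nth_rewrite 1 [← Real.rpow_one (r.factorial : ℝ)]
      exact Real.rpow_le_rpow_of_exponent_le hfac1 hra
    have h4 : (x.descFactorial a : ℝ) * y ^ ((a:ℝ)/2) ≤ (r.factorial : ℝ) := by
      calc (x.descFactorial a : ℝ) * y ^ ((a:ℝ)/2) ≤ (x.descFactorial a : ℝ) * 1 :=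
            mul_le_mul_of_nonneg_left h2 (by positivity)
        _ = (x.descFactorial a : ℝ) := mul_one _
        _ ≤ _ := h1
    linarith
  set T := (x.descFactorial a : ℝ) * y ^ ((a:ℝ)/2) with hTdef
  have h1T : (1:ℝ) ≤ T := le_trans hrpow1 hT.le
  have hTle : T ≤ T ^ ((r:ℝ)/(a:ℝ)) := by
    nth_rewrite 1 [← Real.rpow_one T]
    exact Real.rpow_le_rpow_of_exponent_le h1T hra
  have hTe : T ^ ((r:ℝ)/(a:ℝ)) =
      (x.descFactorial a : ℝ) ^ ((r:ℝ)/(a:ℝ)) * y ^ ((r:ℝ)/2) := by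
    rw [hTdef, Real.mul_rpow (by positivity) (Real.rpow_nonneg hy0 _),
      ← Real.rpow_mul hy0,
      show ((a:ℝ)/2) * ((r:ℝ)/(a:ℝ)) = (r:ℝ)/2 from by field_simp]
  have hkey : ((x:ℝ)) ^ (r:ℕ) ≤ (r.factorial : ℝ) * (x.descFactorial r : ℝ) := by
    exact_mod_cast pow_le_factorial_mul_descFactorial r x hx
  have hdf : (x.descFactorial a : ℝ) ^ ((r:ℝ)/(a:ℝ)) ≤
      (r.factorial : ℝ) * (x.descFactorial r : ℝ) := by
    have h1 : (x.descFactorial a : ℝ) ≤ (x:ℝ) ^ (a:ℕ) := by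
      exact_mod_cast Nat.descFactorial_le_pow x a
    calc (x.descFactorial a : ℝ) ^ ((r:ℝ)/(a:ℝ))
        ≤ ((x:ℝ) ^ (a:ℕ)) ^ ((r:ℝ)/(a:ℝ)) :=
          Real.rpow_le_rpow (by positivity) h1 (by linarith)
      _ = (x:ℝ) ^ (r:ℕ) := by
          rw [← Real.rpow_natCast (x:ℝ) a, ← Real.rpow_mul (by positivity)]
          rw [show (a:ℝ) * ((r:ℝ)/(a:ℝ)) = (r:ℝ) by field_simp]
          rw [Real.rpow_natCast]
      _ ≤ _ := hkey
  have hfin : T ^ ((r:ℝ)/(a:ℝ)) ≤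
      (r.factorial : ℝ) * (x.descFactorial r : ℝ) * y ^ ((r:ℝ)/2) := by
    rw [hTe]
    exact mul_le_mul_of_nonneg_right hdf (Real.rpow_nonneg hy0 _)
  have h0 : (0:ℝ) ≤ (r.factorial : ℝ) ^ ((r:ℝ)/(a:ℝ)) := by positivity
  linarith
end

section
/- For all integers m ≥ 1 and s ≥ 1 and every real z ≥ 0, Σ_{t=1}^{s} C(m,t) · t^s · z^t ≤ s^s · (e^{zm} − 1), where C(m,t) denotes the binomial coefficient (interpreted as 0 when t > m). -/
open Finset Real

/-- For all integers `m, s ≥ 1` and every real `z ≥ 0`,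
`Σ_{t=1}^{s} C(m,t) · t^s · z^t ≤ s^s · (e^{zm} − 1)`. -/
theorem sum_choose_pow_le (m s : ℕ) (hm : 1 ≤ m) (hs : 1 ≤ s) (z : ℝ) (hz : 0 ≤ z) :
    ∑ t ∈ Finset.Icc 1 s, (m.choose t : ℝ) * (t : ℝ) ^ s * z ^ t ≤
      (s : ℝ) ^ s * (Real.exp (z * m) - 1) := by
  set N := max s m with hN
  -- Step 1: bound t^s by s^s
  have step1 : ∑ t ∈ Finset.Icc 1 s, (m.choose t : ℝ) * (t : ℝ) ^ s * z ^ t ≤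
      (s : ℝ) ^ s * ∑ t ∈ Finset.Icc 1 s, (m.choose t : ℝ) * z ^ t := by
    rw [Finset.mul_sum]
    apply Finset.sum_le_sum
    intro t ht
    simp only [Finset.mem_Icc] at ht
    have h1 : (t : ℝ) ^ s ≤ (s : ℝ) ^ s := by
      apply pow_le_pow_left₀ (by positivity)
      exact_mod_cast ht.2
    calc (m.choose t : ℝ) * (t : ℝ) ^ s * z ^ t
        ≤ (m.choose t : ℝ) * (s : ℝ) ^ s * z ^ t := by
          apply mul_le_mul_of_nonneg_right _ (by positivity)
          exact mul_le_mul_of_nonneg_left h1 (by positivity)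
      _ = (s : ℝ) ^ s * ((m.choose t : ℝ) * z ^ t) := by ring
  -- Step 2: extend sum to Icc 1 N
  have step2 : ∑ t ∈ Finset.Icc 1 s, (m.choose t : ℝ) * z ^ t ≤
      ∑ t ∈ Finset.Icc 1 N, (m.choose t : ℝ) * z ^ t := by
    apply Finset.sum_le_sum_of_subset_of_nonneg
    · exact Finset.Icc_subset_Icc le_rfl (le_max_left _ _)
    · intro i _ _; positivity
  -- Step 3: the full sum equals (1+z)^m - 1
  have step3 : ∑ t ∈ Finset.Icc 1 N, (m.choose t : ℝ) * z ^ t = (1 + z) ^ m - 1 := by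
    have hfull : ∑ t ∈ Finset.range (N + 1), (m.choose t : ℝ) * z ^ t = (1 + z) ^ m := by
      have hsub : ∑ t ∈ Finset.range (N + 1), (m.choose t : ℝ) * z ^ t
          = ∑ t ∈ Finset.range (m + 1), (m.choose t : ℝ) * z ^ t := by
        symm
        apply Finset.sum_subset
        · apply Finset.range_subset_range.2
          omega
        · intro x _ hx
          simp only [Finset.mem_range, not_lt] at hx
          rw [Nat.choose_eq_zero_of_lt (by omega)]
          simp
      rw [hsub, add_comm 1 z, add_pow]
      simp [mul_comm]
    have hsplit : Finset.range (N + 1) = insert 0 (Finset.Icc 1 N) := by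
      ext x
      simp [Finset.mem_range, Finset.mem_Icc]
      omega
    rw [hsplit, Finset.sum_insert (by simp)] at hfull
    simp at hfull
    linarith
  -- Step 4: (1+z)^m ≤ exp (z*m)
  have step4 : (1 + z) ^ m ≤ Real.exp (z * m) := by
    have h1 : (1 + z) ≤ Real.exp z := by
      have := Real.add_one_le_exp z
      linarith
    calc (1 + z) ^ m ≤ (Real.exp z) ^ m := pow_le_pow_left₀ (by positivity) h1 m
      _ = Real.exp (z * m) := by rw [← Real.exp_nat_mul, mul_comm]
  have hs_nonneg : (0 : ℝ) ≤ (s : ℝ) ^ s := by positivity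
  calc ∑ t ∈ Finset.Icc 1 s, (m.choose t : ℝ) * (t : ℝ) ^ s * z ^ t
      ≤ (s : ℝ) ^ s * ∑ t ∈ Finset.Icc 1 s, (m.choose t : ℝ) * z ^ t := step1
    _ ≤ (s : ℝ) ^ s * ((1 + z) ^ m - 1) := by
        apply mul_le_mul_of_nonneg_left _ hs_nonneg
        rw [← step3]; exact step2
    _ ≤ (s : ℝ) ^ s * (Real.exp (z * m) - 1) := by
        apply mul_le_mul_of_nonneg_left _ hs_nonneg
        linarith
end
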